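/- arXiv:2009.11078 — 4 statements merged into one kernel-verified Lean document; each statement's English description precedes it below -/
import Mathlib

section
/- Let m ≥ 2 be an integer, a > 0, and |x₀| < a. Then ∫_0^∞ (e^{-2(x₀+a)r} + e^{2(x₀-a)r}) · r^m / (1 - e^{-4ar}) dr ≤ C/(a-|x₀|)^{m+1}, where C = 2·m!·∑_{k=0}^∞ (2k+1)^{-(m+1)} depends only on m. -/
open MeasureTheory Real Set
open scoped Nat

/-!
Expanding `1 / (1 - e^{-dr}) = ∑ₖ e^{-dkr}` and integrating term by term against
`∫₀^∞ rⁿ e^{-cr} dr = n! / c^{n+1}` gives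
`∫₀^∞ rⁿ e^{-cr} / (1 - e^{-dr}) dr = ∑ₖ n! / (c + dk)^{n+1}`.
The two exponentials of the kernel have `c = 2(a ± x₀) ≥ 2(a - |x₀|)` and `d = 4a ≥ 4(a - |x₀|)`,
so `c + dk ≥ 2(a - |x₀|)(2k + 1)` and each series is dominated termwise by the odd `ζ`-series.
-/

lemma integral_pow_mul_exp_neg_mul_Ioi (n : ℕ) {c : ℝ} (hc : 0 < c) :
    ∫ t in Ioi (0 : ℝ), t ^ n * exp (-(c * t)) = n ! / c ^ (n + 1) := by
  have h := integral_rpow_mul_exp_neg_mul_Ioi (a := n + 1) (by positivity) hc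
  simp only [add_sub_cancel_right, rpow_natCast] at h
  rw [h, Gamma_nat_eq_factorial, ← Nat.cast_succ, rpow_natCast, div_pow, one_pow,
    one_div_mul_eq_div]

lemma integrableOn_pow_mul_exp_neg_mul_Ioi (n : ℕ) {c : ℝ} (hc : 0 < c) :
    IntegrableOn (fun t : ℝ => t ^ n * exp (-(c * t))) (Ioi 0) :=
  Integrable.of_integral_ne_zero <| by
    rw [integral_pow_mul_exp_neg_mul_Ioi n hc]; positivity

lemma hasSum_exp_neg_add_mul {c d r : ℝ} (hd : 0 < d) (hr : 0 < r) :
    HasSum (fun k : ℕ => exp (-((c + d * k) * r))) (exp (-(c * r)) / (1 - exp (-(d * r)))) := by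
  have hq : exp (-(d * r)) < 1 := exp_lt_one_iff.mpr (by nlinarith)
  have hterm (k : ℕ) : exp (-((c + d * k) * r)) = exp (-(c * r)) * exp (-(d * r)) ^ k := by
    rw [← exp_nat_mul, ← exp_add]
    ring_nf
  simpa only [hterm, div_eq_mul_inv] using
    (hasSum_geometric_of_lt_one (exp_pos _).le hq).mul_left (exp (-(c * r)))

lemma summable_one_div_two_mul_add_one_pow {n : ℕ} (hn : 1 < n) :
    Summable fun k : ℕ => 1 / (2 * k + 1 : ℝ) ^ n := by
  have h := (summable_one_div_nat_pow.mpr hn).comp_injective (i := fun k : ℕ => 2 * k + 1)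
    fun x y hxy => by simpa using hxy
  simpa [Function.comp_def] using h

lemma one_div_add_mul_pow_le {c d e : ℝ} (he : 0 < e) (hc : e ≤ c) (hd : 2 * e ≤ d)
    (n k : ℕ) : 1 / (c + d * k) ^ n ≤ 1 / e ^ n * (1 / (2 * k + 1) ^ n) := by
  have hk : (0 : ℝ) ≤ k := k.cast_nonneg
  have hle : e * (2 * k + 1) ≤ c + d * k := by nlinarith
  rw [one_div_mul_one_div, ← mul_pow]
  gcongr

lemma summable_one_div_add_mul_pow {n : ℕ} (hn : 1 < n) {c d : ℝ} (hc : 0 < c) (hd : 0 < d) :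
    Summable fun k : ℕ => 1 / (c + d * k) ^ n := by
  have he : 0 < min c (d / 2) := lt_min hc (half_pos hd)
  refine ((summable_one_div_two_mul_add_one_pow hn).mul_left _).of_nonneg_of_le
    (fun k => by positivity) fun k => one_div_add_mul_pow_le he (min_le_left _ _) ?_ n k
  linarith [min_le_right c (d / 2)]

lemma hasSum_integral_pow_mul_exp_div_one_sub_exp {n : ℕ} (hn : n ≠ 0) {c d : ℝ} (hc : 0 < c)
    (hd : 0 < d) :
    HasSum (fun k : ℕ => (n ! : ℝ) / (c + d * k) ^ (n + 1))
      (∫ r in Ioi (0 : ℝ), r ^ n * exp (-(c * r)) / (1 - exp (-(d * r)))) := by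
  have hck (k : ℕ) : 0 < c + d * k := by positivity
  have hnorm (k : ℕ) : ∫ r in Ioi (0 : ℝ), ‖r ^ n * exp (-((c + d * k) * r))‖ =
      n ! / (c + d * k) ^ (n + 1) := by
    rw [← integral_pow_mul_exp_neg_mul_Ioi n (hck k)]
    refine setIntegral_congr_fun measurableSet_Ioi fun r (hr : 0 < r) => ?_
    exact Real.norm_of_nonneg (by positivity)
  have hsum : Summable fun k : ℕ => (n ! : ℝ) / (c + d * k) ^ (n + 1) := by
    simpa only [mul_one_div] using
      (summable_one_div_add_mul_pow (by omega) hc hd).mul_left (n ! : ℝ)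
  have h := hasSum_integral_of_summable_integral_norm
    (F := fun (k : ℕ) (r : ℝ) => r ^ n * exp (-((c + d * k) * r)))
    (fun k => integrableOn_pow_mul_exp_neg_mul_Ioi n (hck k)) (by simpa only [hnorm] using hsum)
  simp only [integral_pow_mul_exp_neg_mul_Ioi n (hck _)] at h
  rwa [setIntegral_congr_fun measurableSet_Ioi fun r (hr : 0 < r) => by
    simpa only [mul_div_assoc] using ((hasSum_exp_neg_add_mul hd hr).mul_left (r ^ n)).tsum_eq.symm]

lemma integrableOn_pow_mul_exp_div_one_sub_exp {n : ℕ} (hn : n ≠ 0) {c d : ℝ} (hc : 0 < c)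
    (hd : 0 < d) :
    IntegrableOn (fun r : ℝ => r ^ n * exp (-(c * r)) / (1 - exp (-(d * r)))) (Ioi 0) := by
  have h := hasSum_integral_pow_mul_exp_div_one_sub_exp hn hc hd
  refine Integrable.of_integral_ne_zero ?_
  rw [← h.tsum_eq]
  exact (h.summable.tsum_pos (fun k => by positivity) 0 (by positivity)).ne'

lemma tsum_one_div_add_mul_pow_le {p : ℕ} (hp : 1 < p) {c d e : ℝ} (he : 0 < e) (hc : e ≤ c)
    (hd : 2 * e ≤ d) :
    ∑' k : ℕ, 1 / (c + d * k) ^ p ≤ 1 / e ^ p * ∑' k : ℕ, 1 / (2 * k + 1 : ℝ) ^ p := by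
  rw [← tsum_mul_left]
  exact (summable_one_div_add_mul_pow hp (he.trans_le hc) (by linarith)).tsum_le_tsum
    (one_div_add_mul_pow_le he hc hd p) ((summable_one_div_two_mul_add_one_pow hp).mul_left _)

lemma integral_pow_mul_exp_div_one_sub_exp_le {n : ℕ} (hn : n ≠ 0) {c d e : ℝ} (he : 0 < e)
    (hc : e ≤ c) (hd : 2 * e ≤ d) :
    ∫ r in Ioi (0 : ℝ), r ^ n * exp (-(c * r)) / (1 - exp (-(d * r))) ≤
      n ! / e ^ (n + 1) * ∑' k : ℕ, 1 / (2 * k + 1 : ℝ) ^ (n + 1) := by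
  rw [← (hasSum_integral_pow_mul_exp_div_one_sub_exp hn (he.trans_le hc) (by linarith)).tsum_eq]
  calc ∑' k : ℕ, (n ! : ℝ) / (c + d * k) ^ (n + 1)
      = n ! * ∑' k : ℕ, 1 / (c + d * k) ^ (n + 1) := by
        simp only [← tsum_mul_left, mul_one_div]
    _ ≤ n ! * (1 / e ^ (n + 1) * ∑' k : ℕ, 1 / (2 * k + 1 : ℝ) ^ (n + 1)) := by
        gcongr
        exact tsum_one_div_add_mul_pow_le (by omega) he hc hd
    _ = _ := by ring

/-- Upper bound for the radial part of the diagonal Bergman kernel on the strip `{|x₀| < a}`,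
with constant `C = 2 · m! · ∑_{k=0}^∞ (2k+1)^{-(m+1)}` depending only on `m`. -/
theorem bergman_radial_upper_bound (m : ℕ) (hm : 2 ≤ m) (a x₀ : ℝ) (ha : 0 < a)
    (hx : |x₀| < a) :
    ∫ r in Set.Ioi (0 : ℝ),
        (Real.exp (-2 * (x₀ + a) * r) + Real.exp (2 * (x₀ - a) * r)) * r ^ m /
          (1 - Real.exp (-4 * a * r)) ≤
      (2 * (Nat.factorial m : ℝ) * ∑' k : ℕ, (1 : ℝ) / ((2 * k + 1 : ℝ)) ^ (m + 1)) /
        (a - |x₀|) ^ (m + 1) := by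
  set S := ∑' k : ℕ, 1 / (2 * k + 1 : ℝ) ^ (m + 1)
  have hm0 : m ≠ 0 := by omega
  have he : 0 < 2 * (a - |x₀|) := by linarith
  have hplus : 2 * (a - |x₀|) ≤ 2 * (a + x₀) := by linarith [neg_abs_le x₀]
  have hminus : 2 * (a - |x₀|) ≤ 2 * (a - x₀) := by linarith [le_abs_self x₀]
  have hd : 2 * (2 * (a - |x₀|)) ≤ 4 * a := by linarith [abs_nonneg x₀]
  have hsplit (r : ℝ) : (exp (-2 * (x₀ + a) * r) + exp (2 * (x₀ - a) * r)) * r ^ m /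
      (1 - exp (-4 * a * r)) = r ^ m * exp (-(2 * (a + x₀) * r)) / (1 - exp (-(4 * a * r))) +
        r ^ m * exp (-(2 * (a - x₀) * r)) / (1 - exp (-(4 * a * r))) := by
    ring_nf
  simp_rw [hsplit]
  rw [integral_add
    (integrableOn_pow_mul_exp_div_one_sub_exp hm0 (he.trans_le hplus) (by positivity))
    (integrableOn_pow_mul_exp_div_one_sub_exp hm0 (he.trans_le hminus) (by positivity))]
  calc _ ≤ m ! / (2 * (a - |x₀|)) ^ (m + 1) * S + m ! / (2 * (a - |x₀|)) ^ (m + 1) * S :=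
        add_le_add (integral_pow_mul_exp_div_one_sub_exp_le hm0 he hplus hd)
          (integral_pow_mul_exp_div_one_sub_exp_le hm0 he hminus hd)
    _ = 2 * m ! * S / (2 ^ (m + 1) * (a - |x₀|) ^ (m + 1)) := by rw [mul_pow]; ring
    _ ≤ 2 * m ! * S / (1 * (a - |x₀|) ^ (m + 1)) := by
      have : 0 ≤ S := tsum_nonneg fun k => by positivity
      gcongr
      exact one_le_pow₀ one_le_two
    _ = _ := by rw [one_mul]
end

section
/- Let a > 0, 0 < δ < a, m ≥ 1 and let u : S_a → ℝ be a function on the strip S_a = {(x₀,x) : |x₀| < a, x ∈ ℝ^m} ⊂ ℝ^{m+1} such that |u|² is subharmonic and ∫_{-a}^a ∫_{ℝ^m} |u|² dx dx₀ < ∞. Then for every x₀ with |x₀| < a - δ, ∫_{ℝ^m} |u(x₀ + x)|² dx ≤ (C'/δ) ∫_{-a}^a ∫_{ℝ^m} |u(y₀+y)|² dy dy₀, where C' depends only on m. -/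
/-!
Sub-mean-value on the ball of radius `δ` about `(x₀, x)` (for the sup metric on `ℝ × ℝ^m`, the
product `ball x₀ δ × ball x δ`, of volume `2δ·κ` with `κ = |B_δ| ⊂ ℝ^m`) bounds `|u(x₀, x)|²` by
`(2δκ)⁻¹` times the integral of `|u|²` over that box. Integrating in `x` and applying Tonelli,
every point of the slab `ball x₀ δ × ℝ^m` is counted with weight `κ`, so the slice integral is at
most `(2δ)⁻¹` times the integral over the slab, hence over the whole strip. Working with lower
Lebesgue integrals avoids any measurability assumption on the slice, and gives `C' = 1/2`.
-/

open MeasureTheory Real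

/-- `v` satisfies the sub-mean-value inequality on the open set `S` (the characterization of
subharmonicity used here): on every closed ball contained in `S`, the value at the center is
at most the ball average. -/
def SubMeanValueOn {E : Type*} [NormedAddCommGroup E] [NormedSpace ℝ E] [MeasureSpace E]
    (v : E → ℝ) (S : Set E) : Prop :=
  ∀ z ρ, 0 < ρ → Metric.closedBall z ρ ⊆ S →
    v z ≤ (1 / (volume (Metric.ball z ρ)).toReal) * ∫ y in Metric.ball z ρ, v y

open Metric Set
open scoped ENNReal

theorem integral_le_toReal_lintegral_ofReal {α : Type*} [MeasurableSpace α] {μ : Measure α}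
    {f : α → ℝ} (hf : ∀ x, 0 ≤ f x) :
    ∫ x, f x ∂μ ≤ (∫⁻ x, ENNReal.ofReal (f x) ∂μ).toReal := by
  simpa only [Real.norm_of_nonneg (hf _)] using
    (le_abs_self _).trans (norm_integral_le_lintegral_norm f)

theorem SubMeanValueOn.ofReal_le_inv_volume_mul_lintegral {E : Type*} [NormedAddCommGroup E]
    [NormedSpace ℝ E] [MeasureSpace E] {v : E → ℝ} {S : Set E} (hv : SubMeanValueOn v S)
    (hv0 : ∀ y, 0 ≤ v y) {z : E} {ρ : ℝ} (hρ : 0 < ρ) (hz : closedBall z ρ ⊆ S) :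
    ENNReal.ofReal (v z) ≤
      (volume (ball z ρ))⁻¹ * ∫⁻ y in ball z ρ, ENNReal.ofReal (v y) := by
  calc ENNReal.ofReal (v z)
      ≤ ENNReal.ofReal ((volume (ball z ρ))⁻¹.toReal *
          (∫⁻ y in ball z ρ, ENNReal.ofReal (v y)).toReal) := by
        refine ENNReal.ofReal_le_ofReal ((hv z ρ hρ hz).trans ?_)
        rw [ENNReal.toReal_inv, ← one_div]
        gcongr
        exact integral_le_toReal_lintegral_ofReal hv0
    _ ≤ _ := by
        rw [ENNReal.ofReal_mul ENNReal.toReal_nonneg]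
        gcongr <;> exact ENNReal.ofReal_toReal_le

theorem lintegral_lintegral_preimage_snd_ball {X E : Type*} [MeasurableSpace X]
    [NormedAddCommGroup E] [MeasurableSpace E] [BorelSpace E] [SecondCountableTopology E]
    (ν : Measure E) [ν.IsAddHaarMeasure] [SFinite ν] (ρ : Measure (X × E)) [SFinite ρ]
    {g : X × E → ℝ≥0∞} (hg : AEMeasurable g ρ) (δ : ℝ) :
    ∫⁻ x, ∫⁻ q in Prod.snd ⁻¹' ball x δ, g q ∂ρ ∂ν = ν (ball 0 δ) * ∫⁻ q, g q ∂ρ := by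
  have hmeas : MeasurableSet {p : E × (X × E) | dist p.2.2 p.1 < δ} :=
    measurableSet_lt (measurable_snd.snd.dist measurable_fst) measurable_const
  calc ∫⁻ x, ∫⁻ q in Prod.snd ⁻¹' ball x δ, g q ∂ρ ∂ν
      = ∫⁻ x, ∫⁻ q, {p : E × (X × E) | dist p.2.2 p.1 < δ}.indicator (fun p => g p.2) (x, q) ∂ρ ∂ν := by
        congr! 2 with x
        rw [← lintegral_indicator (measurable_snd measurableSet_ball)]
        rfl
    _ = ∫⁻ q, ∫⁻ x, {p : E × (X × E) | dist p.2.2 p.1 < δ}.indicator (fun p => g p.2) (x, q) ∂ν ∂ρ :=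
        lintegral_lintegral_swap ((hg.comp_snd).indicator hmeas)
    _ = ∫⁻ q, ν (ball 0 δ) * g q ∂ρ := by
        -- after the swap, `q` is counted once for each `x ∈ ball q.2 δ`
        congr! 2 with q
        have hx : ∀ x, {p : E × (X × E) | dist p.2.2 p.1 < δ}.indicator (fun p => g p.2) (x, q) =
            (ball q.2 δ).indicator (fun _ => g q) x := fun x => by
          simp only [indicator, mem_ofPred_eq, mem_ball, dist_comm]
        rw [lintegral_congr hx, lintegral_indicator_const measurableSet_ball,
          ν.addHaar_ball_center, mul_comm]
    _ = ν (ball 0 δ) * ∫⁻ q, g q ∂ρ := lintegral_const_mul'' _ hg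

theorem closedBall_subset_Ioo_of_abs_lt {a δ t : ℝ} (ht : |t| < a - δ) :
    closedBall t δ ⊆ Ioo (-a) a := by
  intro y hy
  rw [mem_closedBall, Real.dist_eq] at hy
  have := abs_sub_abs_le_abs_sub y t
  constructor <;> linarith [abs_lt.1 ht, le_abs_self y, neg_abs_le y]

theorem setOf_abs_fst_lt_eq_Ioo_prod {E : Type*} (a : ℝ) :
    {q : ℝ × E | |q.1| < a} = Ioo (-a) a ×ˢ univ := by
  ext q
  simp [abs_lt]

theorem intervalIntegral_integral_eq_toReal_setLIntegral {E : Type*} [MeasureSpace E]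
    [SigmaFinite (volume : Measure E)] {a : ℝ} (ha : 0 ≤ a) {F : ℝ × E → ℝ}
    (hF0 : ∀ q, 0 ≤ F q) (hint : IntegrableOn F {q : ℝ × E | |q.1| < a}) :
    ∫ y₀ in -a..a, ∫ y, F (y₀, y) =
      (∫⁻ q in {q : ℝ × E | |q.1| < a}, ENNReal.ofReal (F q)).toReal := by
  rw [setOf_abs_fst_lt_eq_Ioo_prod, Measure.volume_eq_prod] at hint ⊢
  rw [intervalIntegral.integral_of_le (by linarith), integral_Ioc_eq_integral_Ioo,
    ← integral_eq_lintegral_of_nonneg_ae (.of_forall hF0) hint.aestronglyMeasurable,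
    setIntegral_prod F hint, Measure.restrict_univ]

section Strip

variable {E : Type*} [NormedAddCommGroup E] [NormedSpace ℝ E] [MeasureSpace E] [BorelSpace E]
  [FiniteDimensional ℝ E] [(volume : Measure E).IsAddHaarMeasure]

theorem volume_ball_prod (t : ℝ) (x : E) (δ : ℝ) :
    volume (ball ((t, x) : ℝ × E) δ) = ENNReal.ofReal (2 * δ) * volume (ball (0 : E) δ) := by
  rw [← ball_prod_same, Measure.volume_eq_prod, Measure.prod_prod, Real.volume_ball,
    Measure.addHaar_ball_center]

theorem SubMeanValueOn.lintegral_slice_le {a δ t : ℝ} {F : ℝ × E → ℝ}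
    (hsub : SubMeanValueOn F {q : ℝ × E | |q.1| < a}) (hF0 : ∀ q, 0 ≤ F q)
    (hint : IntegrableOn F {q : ℝ × E | |q.1| < a}) (hδ : 0 < δ) (ht : |t| < a - δ) :
    ∫⁻ x, ENNReal.ofReal (F (t, x)) ≤
      (ENNReal.ofReal (2 * δ))⁻¹ * ∫⁻ q in {q : ℝ × E | |q.1| < a}, ENNReal.ofReal (F q) := by
  set κ := volume (ball (0 : E) δ)
  set B : Set (ℝ × E) := ball t δ ×ˢ univ
  have hκ0 : κ ≠ 0 := (measure_ball_pos _ _ hδ).ne'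
  have hκtop : κ ≠ ⊤ := measure_ball_lt_top.ne
  have hstrip := setOf_abs_fst_lt_eq_Ioo_prod (E := E) a
  have hclosedBall : ∀ x : E, closedBall (t, x) δ ⊆ {q : ℝ × E | |q.1| < a} := fun x => by
    rw [← closedBall_prod_same, hstrip]
    exact prod_mono (closedBall_subset_Ioo_of_abs_lt ht) (subset_univ _)
  have hB : B ⊆ {q : ℝ × E | |q.1| < a} :=
    hstrip ▸ prod_mono (ball_subset_closedBall.trans (closedBall_subset_Ioo_of_abs_lt ht)) le_rfl
  have hg : AEMeasurable (fun q => ENNReal.ofReal (F q)) (volume.restrict B) :=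
    (hint.mono_set hB).aestronglyMeasurable.aemeasurable.ennreal_ofReal
  have hpoint : ∀ x, ENNReal.ofReal (F (t, x)) ≤ (ENNReal.ofReal (2 * δ) * κ)⁻¹ *
      ∫⁻ q in Prod.snd ⁻¹' ball x δ, ENNReal.ofReal (F q) ∂(volume.restrict B) := by
    intro x
    have hball : Prod.snd ⁻¹' ball x δ ∩ B = ball (t, x) δ := by
      rw [← ball_prod_same]; ext q; simp [B, and_comm]
    rw [Measure.restrict_restrict (measurable_snd measurableSet_ball), hball,
      ← volume_ball_prod t x δ]
    exact hsub.ofReal_le_inv_volume_mul_lintegral hF0 hδ (hclosedBall x)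
  calc ∫⁻ x, ENNReal.ofReal (F (t, x))
      ≤ ∫⁻ x, (ENNReal.ofReal (2 * δ) * κ)⁻¹ *
          ∫⁻ q in Prod.snd ⁻¹' ball x δ, ENNReal.ofReal (F q) ∂(volume.restrict B) :=
        lintegral_mono hpoint
    _ = (ENNReal.ofReal (2 * δ) * κ)⁻¹ * (κ * ∫⁻ q in B, ENNReal.ofReal (F q)) := by
        rw [lintegral_const_mul' _ _ (ENNReal.inv_ne_top.2 (by positivity)),
          lintegral_lintegral_preimage_snd_ball volume _ hg]
    _ = (ENNReal.ofReal (2 * δ))⁻¹ * ∫⁻ q in B, ENNReal.ofReal (F q) := by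
        rw [ENNReal.mul_inv (.inl (by simpa using hδ)) (.inl ENNReal.ofReal_ne_top), mul_assoc,
          ENNReal.inv_mul_cancel_left hκ0 hκtop]
    _ ≤ _ := by gcongr

end Strip

theorem bergman_slice_estimate_general (m : ℕ) :
    ∃ C' : ℝ, 0 < C' ∧
      ∀ (a δ : ℝ) (u : ℝ × EuclideanSpace ℝ (Fin m) → ℝ),
        0 < a → 0 < δ → δ < a →
        SubMeanValueOn (fun q => |u q| ^ 2)
          {q : ℝ × EuclideanSpace ℝ (Fin m) | |q.1| < a} →
        IntegrableOn (fun q => |u q| ^ 2) {q : ℝ × EuclideanSpace ℝ (Fin m) | |q.1| < a} →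
        ∀ x₀ : ℝ, |x₀| < a - δ →
          (∫ x : EuclideanSpace ℝ (Fin m), |u (x₀, x)| ^ 2) ≤
            C' / δ * ∫ y₀ in (-a : ℝ)..a, ∫ y : EuclideanSpace ℝ (Fin m), |u (y₀, y)| ^ 2 := by
  refine ⟨1 / 2, by norm_num, fun a δ u ha hδ _ hsub hint x₀ hx₀ => ?_⟩
  have hF0 : ∀ q, 0 ≤ |u q| ^ 2 := fun q => by positivity
  have hfin := (hint.lintegral_lt_top).ne
  calc ∫ x, |u (x₀, x)| ^ 2
      ≤ (∫⁻ x, ENNReal.ofReal (|u (x₀, x)| ^ 2)).toReal :=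
        integral_le_toReal_lintegral_ofReal fun x => hF0 _
    _ ≤ ((ENNReal.ofReal (2 * δ))⁻¹ *
          ∫⁻ q in {q : ℝ × EuclideanSpace ℝ (Fin m) | |q.1| < a}, ENNReal.ofReal (|u q| ^ 2)).toReal :=
        ENNReal.toReal_mono (ENNReal.mul_ne_top (by simpa using hδ) hfin)
          (hsub.lintegral_slice_le hF0 hint hδ hx₀)
    _ = 1 / 2 / δ * ∫ y₀ in (-a)..a, ∫ y, |u (y₀, y)| ^ 2 := by
        rw [intervalIntegral_integral_eq_toReal_setLIntegral ha.le hF0 hint, ENNReal.toReal_mul,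
          ENNReal.toReal_inv, ENNReal.toReal_ofReal (by positivity)]
        ring

/-- Slice estimate for square-integrable functions on the strip `S_a` whose square is
subharmonic: for `|x₀| < a - δ`, the slice `L²` norm is controlled by `C'/δ` times the full
Bergman norm, with `C'` depending only on `m`. -/
theorem bergman_slice_estimate (m : ℕ) (hm : 1 ≤ m) :
    ∃ C' : ℝ, 0 < C' ∧
      ∀ (a δ : ℝ) (u : ℝ × EuclideanSpace ℝ (Fin m) → ℝ),
        0 < a → 0 < δ → δ < a →
        SubMeanValueOn (fun q => |u q| ^ 2)
          {q : ℝ × EuclideanSpace ℝ (Fin m) | |q.1| < a} →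
        IntegrableOn (fun q => |u q| ^ 2) {q : ℝ × EuclideanSpace ℝ (Fin m) | |q.1| < a} →
        ∀ x₀ : ℝ, |x₀| < a - δ →
          (∫ x : EuclideanSpace ℝ (Fin m), |u (x₀, x)| ^ 2) ≤
            C' / δ * ∫ y₀ in (-a : ℝ)..a, ∫ y : EuclideanSpace ℝ (Fin m), |u (y₀, y)| ^ 2 :=
  bergman_slice_estimate_general m
end

section
/- Let p ∈ [1,2], q = p/(p-1) (q = ∞ if p = 1), a > 0, and g : ℝ^m → ℂ measurable. Suppose that for each x₀ ∈ (-a, a), ‖(e^{-x₀|ξ|} 1_A + e^{x₀|ξ|} 1_{A^c}) g‖_{L^q(ℝ^m)} ≤ C_p ‖f(x₀+·)‖_{L^p(ℝ^m)} for some measurable A ⊆ ℝ^m and f with ∫_{-a}^a ‖f(x₀+·)‖_{L^p}^p dx₀ < ∞ (for 1 < p < 2). Then (∫_{ℝ^m} (e^{pa|ξ|}-e^{-pa|ξ|})^{q/p} (|1_A g|^q + |1_{A^c} g|^q)/(p|ξ|)^{q/p} dξ)^{1/q} ≤ 2^{1/q} C_p (∫_{-a}^a ‖f(x₀+·)‖_{L^p}^p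 dx₀)^{1/p}. -/
/-!
Put `σ ξ = -‖ξ‖` on `A` and `σ ξ = ‖ξ‖` off `A`, so that the slice hypothesis bounds the
`L^q` norm of `e^{t σ} |g|`. Since `∫_{-a}^a e^{p t σ(ξ)} dt = (e^{pa‖ξ‖} - e^{-pa‖ξ‖})/(p‖ξ‖)`
for `ξ ≠ 0`, the left-hand side is the `L^{q/p}` norm in `ξ` of `∫ (e^{t σ} |g|)^p dt`, raised to
the power `1/p`. As `q/p > 1` (this is `p < 2`), Minkowski's integral inequality bounds that norm
by `∫ ‖e^{t σ} g‖_q^p dt ≤ C_p^p ∫ ‖f(t, ·)‖_p^p dt`.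
-/

open MeasureTheory Real Set
open scoped ENNReal

/-- Minkowski's integral inequality. -/
theorem lintegral_Lp_lintegral_le {α β : Type*} [MeasurableSpace α] [MeasurableSpace β]
    {μ : Measure α} [SFinite μ] {ν : Measure β} [SFinite ν] {F : β → α → ℝ≥0∞}
    (hF : Measurable (Function.uncurry F)) {r : ℝ} (hr : 1 < r)
    (hfin : ∫⁻ x, (∫⁻ t, F t x ∂ν) ^ r ∂μ ≠ ∞) :
    (∫⁻ x, (∫⁻ t, F t x ∂ν) ^ r ∂μ) ^ (1 / r) ≤ ∫⁻ t, (∫⁻ x, F t x ^ r ∂μ) ^ (1 / r) ∂ν := by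
  set J := ∫⁻ x, (∫⁻ t, F t x ∂ν) ^ r ∂μ
  have hpq := Real.HolderConjugate.conjExponent hr
  rcases eq_or_ne J 0 with hJ0 | hJ0
  · simp [hJ0, hpq.pos]
  have hS : Measurable fun x => ∫⁻ t, F t x ∂ν := hF.lintegral_prod_left
  have hJ : J ≤ (∫⁻ t, (∫⁻ x, F t x ^ r ∂μ) ^ (1 / r) ∂ν) * J ^ (1 / r.conjExponent) :=
    calc J = ∫⁻ x, (∫⁻ t, F t x ∂ν) * (∫⁻ t, F t x ∂ν) ^ (r - 1) ∂μ := by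
          refine lintegral_congr fun x => ?_
          simpa using ENNReal.rpow_add_of_nonneg (x := ∫⁻ t, F t x ∂ν) 1 (r - 1) zero_le_one
            (by linarith)
      _ = ∫⁻ t, ∫⁻ x, F t x * (∫⁻ t, F t x ∂ν) ^ (r - 1) ∂μ ∂ν := by
          rw [lintegral_lintegral_swap]
          · exact lintegral_congr fun x => (lintegral_mul_const _ hF.of_uncurry_right).symm
          · exact (hF.mul ((hS.comp measurable_snd).pow_const _)).aemeasurable
      _ ≤ ∫⁻ t, (∫⁻ x, F t x ^ r ∂μ) ^ (1 / r) * J ^ (1 / r.conjExponent) ∂ν := by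
          gcongr with t
          exact ENNReal.lintegral_mul_rpow_le_lintegral_rpow_mul_lintegral_rpow hpq
            hF.of_uncurry_left.aemeasurable hS.aemeasurable
      _ = _ := lintegral_mul_const _ ((hF.pow_const r).lintegral_prod_right.pow_const _)
  have hsplit : J ^ (1 / r) * J ^ (1 / r.conjExponent) = J := by
    rw [← ENNReal.rpow_add _ _ hJ0 hfin, one_div, one_div, hpq.inv_add_inv_eq_one,
      ENNReal.rpow_one]
  rw [← ENNReal.mul_le_mul_iff_left (c := J ^ (1 / r.conjExponent)) (by simp [hJ0, hfin])
    (by simp [hJ0, hfin]), hsplit]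
  exact hJ

theorem rpow_one_div_le_mul_rpow_one_div_iff {x y C p q : ℝ} (hx : 0 ≤ x) (hy : 0 ≤ y)
    (hC : 0 ≤ C) (hp : 0 < p) :
    x ^ (1 / q) ≤ C * y ^ (1 / p) ↔ x ^ (p / q) ≤ C ^ p * y := by
  have hx' : x ^ (1 / q) = (x ^ (p / q)) ^ (1 / p) := by
    rw [← rpow_mul hx]; field_simp
  have hCy : C * y ^ (1 / p) = (C ^ p * y) ^ (1 / p) := by
    rw [mul_rpow (by positivity) hy, ← rpow_mul hC, mul_one_div_cancel hp.ne', rpow_one]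
  rw [hx', hCy, rpow_le_rpow_iff (by positivity) (by positivity) (by positivity)]

theorem exp_mul_mul_rpow {t s g p : ℝ} (hg : 0 ≤ g) :
    (exp (t * s) * g) ^ p = exp (t * (p * s)) * g ^ p := by
  rw [mul_rpow (exp_pos _).le hg, ← exp_mul, mul_left_comm, mul_comm p]

theorem rpow_lintegral_ofReal_rpow_le {E : Type*} [MeasurableSpace E] {μ : Measure E}
    {u : E → ℝ} {n C p q : ℝ} (hu0 : 0 ≤ u) (hu : Integrable (fun ξ => u ξ ^ q) μ) (hp : 0 < p)
    (hq : 0 ≤ q) (hC : 0 ≤ C) (hn : 0 ≤ n) (h : (∫ ξ, u ξ ^ q ∂μ) ^ (1 / q) ≤ C * n ^ (1 / p)) :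
    (∫⁻ ξ, ENNReal.ofReal (u ξ ^ p) ^ (q / p) ∂μ) ^ (p / q) ≤ ENNReal.ofReal (C ^ p * n) := by
  have huq : ∀ ξ, ENNReal.ofReal (u ξ ^ p) ^ (q / p) = ENNReal.ofReal (u ξ ^ q) := fun ξ => by
    rw [ENNReal.ofReal_rpow_of_nonneg (rpow_nonneg (hu0 ξ) _) (by positivity),
      ← rpow_mul (hu0 ξ), mul_div_cancel₀ _ hp.ne']
  have hint : 0 ≤ ∫ ξ, u ξ ^ q ∂μ := integral_nonneg fun ξ => rpow_nonneg (hu0 ξ) _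
  simp_rw [huq]
  rw [← ofReal_integral_eq_lintegral_ofReal hu (.of_forall fun ξ => rpow_nonneg (hu0 ξ) _),
    ENNReal.ofReal_rpow_of_nonneg hint (by positivity)]
  exact ENNReal.ofReal_le_ofReal ((rpow_one_div_le_mul_rpow_one_div_iff hint hn hC hp).1 h)

noncomputable def stripKernel (a c : ℝ) : ℝ := ∫ t in Ioo (-a) a, exp (t * c)

theorem stripKernel_nonneg (a c : ℝ) : 0 ≤ stripKernel a c :=
  setIntegral_nonneg measurableSet_Ioo fun _ _ => (exp_pos _).le

theorem integrableOn_exp_mul_Ioo (a c : ℝ) : IntegrableOn (fun t => exp (t * c)) (Ioo (-a) a) :=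
  (by fun_prop : Continuous fun t => exp (t * c)).integrableOn_Icc.mono_set Ioo_subset_Icc_self

theorem stripKernel_eq_of_ne_zero {a c : ℝ} (ha : 0 ≤ a) (hc : c ≠ 0) :
    stripKernel a c = (exp (a * |c|) - exp (-(a * |c|))) / |c| := by
  rw [stripKernel, ← integral_Ioc_eq_integral_Ioo,
    ← intervalIntegral.integral_of_le (neg_le_self ha),
    intervalIntegral.integral_comp_mul_right exp hc, integral_exp, smul_eq_mul]
  rcases hc.lt_or_gt with hc | hc
  · rw [abs_of_neg hc]; field_simp; ring_nf
  · rw [abs_of_pos hc]; field_simp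

theorem setLIntegral_ofReal_exp_mul_mul {a c x : ℝ} (hx : 0 ≤ x) :
    ∫⁻ t in Ioo (-a) a, ENNReal.ofReal (exp (t * c) * x) =
      ENNReal.ofReal (stripKernel a c * x) := by
  rw [← ofReal_integral_eq_lintegral_ofReal ((integrableOn_exp_mul_Ioo a c).mul_const x)
    (.of_forall fun t => mul_nonneg (exp_pos _).le hx), integral_mul_const, stripKernel]

theorem exp_mul_mul_min_le_stripKernel {a t c : ℝ} (ht : t ∈ Ioo (-a) a) :
    exp (t * c) * min (a + t) (a - t) ≤ stripKernel a c := by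
  have hint := integrableOn_exp_mul_Ioo a c
  have hsubinterval : ∀ u v, -a ≤ u → u ≤ v → v ≤ a →
      (∀ s ∈ Ioo u v, exp (t * c) ≤ exp (s * c)) → exp (t * c) * (v - u) ≤ stripKernel a c := by
    intro u v hu huv hv hle
    have hsub : Ioo u v ⊆ Ioo (-a) a := Ioo_subset_Ioo hu hv
    calc exp (t * c) * (v - u) = exp (t * c) * volume.real (Ioo u v) := by
          rw [Real.volume_real_Ioo_of_le huv]
      _ ≤ ∫ s in Ioo u v, exp (s * c) :=
          setIntegral_ge_of_const_le_real measurableSet_Ioo (by simp) hle (hint.mono_set hsub)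
      _ ≤ stripKernel a c :=
          setIntegral_mono_set hint (.of_forall fun _ => (exp_pos _).le) hsub.eventuallyLE
  rcases le_total 0 c with hc | hc
  · refine (mul_le_mul_of_nonneg_left (min_le_right _ _) (exp_pos _).le).trans
      (hsubinterval t a ht.1.le ht.2.le le_rfl fun s hs => exp_le_exp.2 ?_)
    exact mul_le_mul_of_nonneg_right hs.1.le hc
  · refine (mul_le_mul_of_nonneg_left (min_le_left _ _) (exp_pos _).le).trans ?_
    rw [show a + t = t - -a by ring]
    exact hsubinterval (-a) t le_rfl ht.1.le ht.2.le fun s hs =>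
      exp_le_exp.2 (mul_le_mul_of_nonpos_right hs.2.le hc)

section StripBound

variable {E : Type*} [MeasurableSpace E] {μ : Measure E} {σ G : E → ℝ} {a p q : ℝ}

/-- The slice hypotheses use Bochner integrals, which vanish on non-integrable functions, so the
integrability of each slice has to be derived from that of the left-hand side. -/
theorem integrable_exp_mul_mul_rpow (hσ : Measurable σ) (hG : Measurable G) (hG0 : 0 ≤ G)
    (hp : 0 < p) (hq : 0 ≤ q) {t : ℝ} (ht : t ∈ Ioo (-a) a)
    (hL : Integrable (fun ξ => stripKernel a (p * σ ξ) ^ (q / p) * G ξ ^ q) μ) :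
    Integrable (fun ξ => (exp (t * σ ξ) * G ξ) ^ q) μ := by
  set δ := min (a + t) (a - t)
  have hδ : 0 < δ := lt_min (by linarith [ht.1]) (by linarith [ht.2])
  refine (hL.const_mul (δ⁻¹ ^ (q / p))).mono' (by fun_prop : Measurable _).aestronglyMeasurable
    (.of_forall fun ξ => ?_)
  set K := stripKernel a (p * σ ξ)
  have hGp : 0 ≤ G ξ ^ p := rpow_nonneg (hG0 ξ) p
  have hexp : exp (t * (p * σ ξ)) ≤ δ⁻¹ * K := by
    rw [le_inv_mul_iff₀ hδ, mul_comm]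
    exact exp_mul_mul_min_le_stripKernel ht
  have hu : 0 ≤ exp (t * σ ξ) * G ξ := mul_nonneg (exp_pos _).le (hG0 ξ)
  have hpow : (exp (t * σ ξ) * G ξ) ^ q = (exp (t * (p * σ ξ)) * G ξ ^ p) ^ (q / p) := by
    rw [← exp_mul_mul_rpow (hG0 ξ), ← rpow_mul hu, mul_div_cancel₀ _ hp.ne']
  rw [norm_of_nonneg (rpow_nonneg hu _), hpow]
  calc (exp (t * (p * σ ξ)) * G ξ ^ p) ^ (q / p) ≤ (δ⁻¹ * K * G ξ ^ p) ^ (q / p) := by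
        gcongr
    _ = δ⁻¹ ^ (q / p) * (K ^ (q / p) * G ξ ^ q) := by
        rw [mul_rpow (mul_nonneg (inv_pos.2 hδ).le (stripKernel_nonneg _ _)) hGp,
          mul_rpow (inv_pos.2 hδ).le (stripKernel_nonneg _ _),
          ← rpow_mul (hG0 ξ), mul_div_cancel₀ _ hp.ne', mul_assoc]

theorem lintegral_rpow_setLIntegral_exp_mul_mul_rpow (hG0 : 0 ≤ G) (hp : 0 < p) (hq : 0 ≤ q)
    (hL : Integrable (fun ξ => stripKernel a (p * σ ξ) ^ (q / p) * G ξ ^ q) μ) :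
    ∫⁻ ξ, (∫⁻ t in Ioo (-a) a, ENNReal.ofReal ((exp (t * σ ξ) * G ξ) ^ p)) ^ (q / p) ∂μ =
      ENNReal.ofReal (∫ ξ, stripKernel a (p * σ ξ) ^ (q / p) * G ξ ^ q ∂μ) := by
  have hGp : ∀ ξ, 0 ≤ G ξ ^ p := fun ξ => rpow_nonneg (hG0 ξ) p
  rw [ofReal_integral_eq_lintegral_ofReal hL (.of_forall fun ξ =>
    mul_nonneg (rpow_nonneg (stripKernel_nonneg _ _) _) (rpow_nonneg (hG0 ξ) _))]
  refine lintegral_congr fun ξ => ?_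
  simp_rw [exp_mul_mul_rpow (hG0 ξ)]
  rw [setLIntegral_ofReal_exp_mul_mul (hGp ξ),
    ENNReal.ofReal_rpow_of_nonneg (mul_nonneg (stripKernel_nonneg _ _) (hGp ξ)) (by positivity),
    mul_rpow (stripKernel_nonneg _ _) (hGp ξ), ← rpow_mul (hG0 ξ), mul_div_cancel₀ _ hp.ne']

theorem rpow_integral_stripKernel_rpow_mul_le [SFinite μ] (hσ : Measurable σ) (hG : Measurable G)
    (hG0 : 0 ≤ G) (hp : 0 < p) (hpq : p < q) {C : ℝ} (hC : 0 ≤ C) {N : ℝ → ℝ}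
    (hN0 : ∀ t, 0 ≤ N t) (hN : IntegrableOn N (Ioo (-a) a))
    (hslice : ∀ t ∈ Ioo (-a) a,
      (∫ ξ, (exp (t * σ ξ) * G ξ) ^ q ∂μ) ^ (1 / q) ≤ C * N t ^ (1 / p)) :
    (∫ ξ, stripKernel a (p * σ ξ) ^ (q / p) * G ξ ^ q ∂μ) ^ (1 / q) ≤
      C * (∫ t in Ioo (-a) a, N t) ^ (1 / p) := by
  have hq : 0 < q := hp.trans hpq
  have hNint : 0 ≤ ∫ t in Ioo (-a) a, N t := setIntegral_nonneg measurableSet_Ioo fun t _ => hN0 t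
  by_cases hL : Integrable (fun ξ => stripKernel a (p * σ ξ) ^ (q / p) * G ξ ^ q) μ
  swap
  · rw [integral_undef hL, zero_rpow (by positivity)]
    positivity
  have hLint : 0 ≤ ∫ ξ, stripKernel a (p * σ ξ) ^ (q / p) * G ξ ^ q ∂μ := integral_nonneg fun ξ =>
    mul_nonneg (rpow_nonneg (stripKernel_nonneg _ _) _) (rpow_nonneg (hG0 ξ) _)
  set F : ℝ → E → ℝ≥0∞ := fun t ξ => ENNReal.ofReal ((exp (t * σ ξ) * G ξ) ^ p)
  have hF : Measurable (Function.uncurry F) := by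
    unfold F Function.uncurry; fun_prop
  have hJ : ∫⁻ ξ, (∫⁻ t in Ioo (-a) a, F t ξ) ^ (q / p) ∂μ =
      ENNReal.ofReal (∫ ξ, stripKernel a (p * σ ξ) ^ (q / p) * G ξ ^ q ∂μ) :=
    lintegral_rpow_setLIntegral_exp_mul_mul_rpow hG0 hp hq.le hL
  have hF_slice : ∀ t ∈ Ioo (-a) a,
      (∫⁻ ξ, F t ξ ^ (q / p) ∂μ) ^ (1 / (q / p)) ≤ ENNReal.ofReal (C ^ p * N t) := by
    intro t ht
    rw [one_div_div]
    exact rpow_lintegral_ofReal_rpow_le (fun ξ => mul_nonneg (exp_pos _).le (hG0 ξ))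
      (integrable_exp_mul_mul_rpow hσ hG hG0 hp hq.le ht hL) hp hq.le hC (hN0 t) (hslice t ht)
  have hCN : ∫⁻ t in Ioo (-a) a, ENNReal.ofReal (C ^ p * N t) =
      ENNReal.ofReal (C ^ p * ∫ t in Ioo (-a) a, N t) := by
    rw [← ofReal_integral_eq_lintegral_ofReal (hN.const_mul _)
      (.of_forall fun t => by have := hN0 t; positivity), integral_const_mul]
  have hmain := (lintegral_Lp_lintegral_le hF ((one_lt_div hp).2 hpq)
    (hJ ▸ ENNReal.ofReal_ne_top)).trans
    ((setLIntegral_mono' measurableSet_Ioo hF_slice).trans hCN.le)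
  rw [hJ, ENNReal.ofReal_rpow_of_nonneg hLint (by positivity),
    ENNReal.ofReal_le_ofReal_iff (by positivity), one_div_div] at hmain
  exact (rpow_one_div_le_mul_rpow_one_div_iff hLint hNint hC hp).2 hmain

end StripBound

section SignedNorm

variable {E : Type*} [NormedAddCommGroup E] {A : Set E}

open Classical in
noncomputable def signedNorm (A : Set E) (ξ : E) : ℝ := if ξ ∈ A then -‖ξ‖ else ‖ξ‖

theorem measurable_signedNorm [MeasurableSpace E] [OpensMeasurableSpace E] (hA : MeasurableSet A) :
    Measurable (signedNorm A) :=
  Measurable.ite hA measurable_norm.neg measurable_norm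

theorem abs_signedNorm (ξ : E) : |signedNorm A ξ| = ‖ξ‖ := by
  by_cases hξ : ξ ∈ A <;> simp [signedNorm, hξ]

open Classical in
theorem norm_ite_exp_mul_eq (t : ℝ) (ξ : E) (z : ℂ) :
    ‖((if ξ ∈ A then exp (-(t * ‖ξ‖)) else exp (t * ‖ξ‖)) : ℂ) * z‖ =
      exp (t * signedNorm A ξ) * ‖z‖ := by
  by_cases hξ : ξ ∈ A <;>
    simp only [signedNorm, hξ, if_true, if_false, norm_mul, Complex.norm_real, mul_neg,
      norm_of_nonneg (exp_pos _).le]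

theorem stripKernel_mul_signedNorm {a p : ℝ} (ha : 0 ≤ a) (hp : 0 < p) {ξ : E} (hξ : ξ ≠ 0) :
    stripKernel a (p * signedNorm A ξ) =
      (exp (p * a * ‖ξ‖) - exp (-(p * a * ‖ξ‖))) / (p * ‖ξ‖) := by
  have habs : |p * signedNorm A ξ| = p * ‖ξ‖ := by rw [abs_mul, abs_signedNorm, abs_of_pos hp]
  rw [stripKernel_eq_of_ne_zero ha (abs_ne_zero.1 (by rw [habs]; positivity)), habs,
    mul_left_comm, ← mul_assoc]

end SignedNorm

open Classical in
/-- Integral form of the necessary Fourier condition for Bergman spaces `A^p` on the strip,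
`1 < p < 2`, `q = p/(p-1)`: Minkowski's integral inequality applied to the slice-wise
Hausdorff–Young estimates yields the weighted `L^q` bound for `g`. -/
theorem bergman_necessary_fourier_bound (m : ℕ) (hm : 1 ≤ m) (a p q C_p : ℝ)
    (ha : 0 < a) (hp : 1 < p) (hp2 : p < 2) (hq : q = p / (p - 1)) (hC : 0 < C_p)
    (g : EuclideanSpace ℝ (Fin m) → ℂ) (hgmeas : Measurable g)
    (A : Set (EuclideanSpace ℝ (Fin m))) (hA : MeasurableSet A)
    (f : ℝ × EuclideanSpace ℝ (Fin m) → ℂ)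
    (hf : IntegrableOn
      (fun x₀ : ℝ => ∫ x : EuclideanSpace ℝ (Fin m), ‖f (x₀, x)‖ ^ p)
      (Set.Ioo (-a) a))
    (hslice : ∀ x₀ ∈ Set.Ioo (-a : ℝ) a,
      (∫ ξ : EuclideanSpace ℝ (Fin m),
          ‖((if ξ ∈ A then Real.exp (-(x₀ * ‖ξ‖)) else Real.exp (x₀ * ‖ξ‖)) : ℂ) * g ξ‖ ^ q)
            ^ (1 / q) ≤
        C_p * (∫ x : EuclideanSpace ℝ (Fin m), ‖f (x₀, x)‖ ^ p) ^ (1 / p)) :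
    (∫ ξ : EuclideanSpace ℝ (Fin m),
        (Real.exp (p * a * ‖ξ‖) - Real.exp (-(p * a * ‖ξ‖))) ^ (q / p) *
          (Set.indicator A (fun ξ' => ‖g ξ'‖ ^ q) ξ +
            Set.indicator Aᶜ (fun ξ' => ‖g ξ'‖ ^ q) ξ) / (p * ‖ξ‖) ^ (q / p)) ^ (1 / q) ≤
      (2 : ℝ) ^ (1 / q) * C_p *
        (∫ x₀ in (-a : ℝ)..a, ∫ x : EuclideanSpace ℝ (Fin m), ‖f (x₀, x)‖ ^ p) ^ (1 / p) := by
  have hp0 : 0 < p := by linarith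
  have hpq : p < q := by rw [hq, lt_div_iff₀ (by linarith)]; nlinarith
  have : Nonempty (Fin m) := ⟨⟨0, hm⟩⟩
  have hkernel : ∀ᵐ ξ : EuclideanSpace ℝ (Fin m),
      (exp (p * a * ‖ξ‖) - exp (-(p * a * ‖ξ‖))) ^ (q / p) *
          (A.indicator (fun ξ' => ‖g ξ'‖ ^ q) ξ + Aᶜ.indicator (fun ξ' => ‖g ξ'‖ ^ q) ξ) /
          (p * ‖ξ‖) ^ (q / p) = stripKernel a (p * signedNorm A ξ) ^ (q / p) * ‖g ξ‖ ^ q := by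
    filter_upwards [compl_mem_ae_iff.2 (measure_singleton 0)] with ξ hξ
    have hX : 0 ≤ exp (p * a * ‖ξ‖) - exp (-(p * a * ‖ξ‖)) :=
      sub_nonneg.2 (exp_le_exp.2 (neg_le_self (by positivity)))
    rw [Set.indicator_self_add_compl_apply, stripKernel_mul_signedNorm ha.le hp0 hξ,
      div_rpow hX (by positivity)]
    ring
  rw [integral_congr_ae hkernel, intervalIntegral.integral_of_le (by linarith),
    integral_Ioc_eq_integral_Ioo]
  calc _ ≤ C_p * (∫ t in Ioo (-a) a, ∫ x, ‖f (t, x)‖ ^ p) ^ (1 / p) :=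
        rpow_integral_stripKernel_rpow_mul_le (measurable_signedNorm hA) hgmeas.norm
          (fun _ => norm_nonneg _) hp0 hpq hC.le (fun t => integral_nonneg fun _ => by positivity)
          hf (by simpa only [norm_ite_exp_mul_eq] using hslice)
    _ ≤ _ := by
        rw [mul_assoc]
        have hq0 : 0 < q := hp0.trans hpq
        exact le_mul_of_one_le_left (by positivity) (one_le_rpow one_le_two (by positivity))
end

section
/- Let m = 2 and let x₀ ∈ ℝ, R ≥ 1. Then |∫_0^π e^{∓x₀ r} r · (e^{irR} - e^{-irR})/(irR) dr| ≤ C e^{|x₀|π}/R², where C is an absolute constant. -/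
open MeasureTheory Real Complex

/-! With `c₁, c₂ = -x₀ ± iR` the integrand is `(e^{c₁ r} - e^{c₂ r}) / (iR)`: the factor `r`
cancels against the `r` in the denominator. Each `∫_0^π e^{c r} dr = (e^{cπ} - 1)/c` is at most
`2 e^{|x₀|π} / |c| ≤ 2 e^{|x₀|π} / R`, and the remaining division by `iR` gives the second
power of `R`. -/

theorem exp_mul_mul_exp_sub_exp_neg_div (a b r : ℂ) :
    cexp (a * r) * r * ((cexp (b * r) - cexp (-(b * r))) / (b * r)) =
      (cexp ((a + b) * r) - cexp ((a - b) * r)) / b := by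
  rcases eq_or_ne r 0 with rfl | hr
  · simp
  rcases eq_or_ne b 0 with rfl | hb
  · simp
  rw [add_mul, sub_mul, Complex.exp_add, Complex.exp_sub, Complex.exp_neg]
  field_simp

theorem norm_integral_exp_mul_le {c : ℂ} {R T : ℝ} (hR : 0 < R) (him : R ≤ |c.im|)
    (hT : 0 ≤ T) :
    ‖∫ r in (0 : ℝ)..T, cexp (c * r)‖ ≤ 2 * rexp (|c.re| * T) / R := by
  have hc : c ≠ 0 := fun h => by simp [h] at him; linarith
  rw [integral_exp_mul_complex hc, ofReal_zero, mul_zero, Complex.exp_zero, norm_div]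
  have hnum : ‖cexp (c * T) - 1‖ ≤ 2 * rexp (|c.re| * T) := by
    have hexp : ‖cexp (c * T)‖ ≤ rexp (|c.re| * T) := by
      rw [norm_exp, mul_re, ofReal_re, ofReal_im, mul_zero, sub_zero]
      exact Real.exp_le_exp.mpr (mul_le_mul_of_nonneg_right (le_abs_self _) hT)
    have hone : 1 ≤ rexp (|c.re| * T) := Real.one_le_exp (by positivity)
    calc ‖cexp (c * T) - 1‖ ≤ ‖cexp (c * T)‖ + ‖(1 : ℂ)‖ := norm_sub_le _ _
      _ ≤ 2 * rexp (|c.re| * T) := by rw [norm_one]; linarith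
  exact div_le_div₀ (by positivity) hnum hR (him.trans (abs_im_le_norm c))

/-- The `m = 2` case of the `I₂₂` estimate in the bound of `sinc_B`:
`|∫_0^π e^{∓x₀ r} r (e^{irR}-e^{-irR})/(irR) dr| ≤ C e^{|x₀|π}/R²` with an absolute
constant `C`. -/
theorem sinc_I22_estimate_dim_two :
    ∃ C : ℝ, 0 < C ∧ ∀ x₀ R : ℝ, 1 ≤ R →
      ‖∫ r in (0 : ℝ)..Real.pi,
          Complex.exp (-(x₀ * r)) * (r : ℂ) *
            ((Complex.exp (Complex.I * r * R) - Complex.exp (-(Complex.I * r * R))) /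
              (Complex.I * r * R))‖ ≤
        C * Real.exp (|x₀| * Real.pi) / R ^ 2 := by
  refine ⟨4, by norm_num, fun x₀ R hR => ?_⟩
  have hR0 : 0 < R := one_pos.trans_le hR
  set c₁ : ℂ := -x₀ + I * R
  set c₂ : ℂ := -x₀ - I * R
  have hintegrand : ∀ r : ℝ, cexp (-(x₀ * r)) * (r : ℂ) *
      ((cexp (I * r * R) - cexp (-(I * r * R))) / (I * r * R)) =
      (cexp (c₁ * r) - cexp (c₂ * r)) / (I * R) := fun r => by
    rw [← exp_mul_mul_exp_sub_exp_neg_div, neg_mul, mul_right_comm I (r : ℂ)]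
  have hint : ∀ c : ℂ, IntervalIntegrable (fun r : ℝ => cexp (c * r)) volume 0 π :=
    fun c => (by fun_prop : Continuous _).intervalIntegrable _ _
  have hbound : ∀ c : ℂ, c.re = -x₀ → |c.im| = R →
      ‖∫ r in (0 : ℝ)..π, cexp (c * r)‖ ≤ 2 * rexp (|x₀| * π) / R := fun c hre him => by
    simpa [hre] using norm_integral_exp_mul_le hR0 him.ge pi_pos.le
  have h₁ := hbound c₁ (by simp [c₁]) (by simp [c₁, hR0.le])
  have h₂ := hbound c₂ (by simp [c₂]) (by simp [c₂, hR0.le])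
  rw [intervalIntegral.integral_congr fun r _ => hintegrand r, intervalIntegral.integral_div,
    intervalIntegral.integral_sub (hint c₁) (hint c₂), norm_div]
  calc _ ≤ (2 * rexp (|x₀| * π) / R + 2 * rexp (|x₀| * π) / R) / ‖I * (R : ℂ)‖ := by
        gcongr; exact (norm_sub_le _ _).trans (add_le_add h₁ h₂)
    _ = 4 * rexp (|x₀| * π) / R ^ 2 := by
        rw [norm_mul, norm_I, norm_real, Real.norm_of_nonneg hR0.le]; ring
end
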